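/- Let X ⊆ ω be a BK-space whose closed unit ball is closed (equivalently compact) as a subset of the Fréchet space ω. Suppose C_t is a bounded operator on X for every t ∈ [0,1) with M := sup_{t ∈ [0,1)} ‖C_t‖ < ∞. Then C_1 maps X into X and is a bounded operator on X with ‖C_1‖ ≤ M. -/

import Mathlib

/-!
For fixed `x`, the vectors `C_t x` with `t ↑ 1` lie in the `X`-ball of radius `M‖x‖`, and they
converge to `C_1 x` in `ω` because every coordinate of `C_t x` is a polynomial in `t`. Since that
ball is closed in `ω`, `C_1 x` lies in it; injectivity of `X ↪ ω` then makes `x ↦ C_1 x` linear.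
-/

/-- The generalized Cesàro operator on ω = ℂ^ℕ₀. -/
noncomputable def Ces (t : ℝ) (x : ℕ → ℂ) : ℕ → ℂ :=
  fun n => (∑ i ∈ Finset.range (n + 1), (t : ℂ) ^ (n - i) * x i) / ((n : ℂ) + 1)

open Filter Metric Topology Pointwise

theorem isClosed_image_closedBall_of_isClosed_image_unitBall {𝕜 E F : Type*} [RCLike 𝕜]
    [NormedAddCommGroup E] [NormedSpace 𝕜 E] [AddCommGroup F] [Module 𝕜 F]
    [TopologicalSpace F] [ContinuousConstSMul 𝕜 F] [T1Space F] (e : E →ₗ[𝕜] F)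
    (hball : IsClosed (e '' closedBall 0 1)) {r : ℝ} (hr : 0 ≤ r) :
    IsClosed (e '' closedBall 0 r) := by
  rcases hr.eq_or_lt with rfl | hr
  · simp
  have hscale : closedBall (0 : E) r = (r : 𝕜) • closedBall (0 : E) 1 := by
    rw [_root_.smul_closedBall _ _ zero_le_one, smul_zero, RCLike.norm_ofReal, abs_of_pos hr,
      mul_one]
  rw [hscale, image_smul_set]
  exact hball.smul_of_ne_zero (RCLike.ofReal_ne_zero.mpr hr.ne')

noncomputable def cesLinearMap (t : ℝ) : (ℕ → ℂ) →ₗ[ℂ] (ℕ → ℂ) where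
  toFun := Ces t
  map_add' x y := by
    funext n
    simp only [Ces, Pi.add_apply, mul_add, Finset.sum_add_distrib, add_div]
  map_smul' c x := by
    funext n
    simp only [Ces, Pi.smul_apply, smul_eq_mul, RingHom.id_apply, mul_left_comm _ c,
      ← Finset.mul_sum, mul_div_assoc]

theorem continuous_ces_left (x : ℕ → ℂ) : Continuous fun t : ℝ => Ces t x :=
  continuous_pi fun n => by
    unfold Ces
    fun_prop

theorem exists_continuousLinearMap_of_forall_exists_bound {𝕜 E F : Type*}
    [NontriviallyNormedField 𝕜] [NormedAddCommGroup E] [NormedSpace 𝕜 E]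
    [AddCommGroup F] [Module 𝕜 F] (e : E →ₗ[𝕜] F) (he : Function.Injective e) (A : F →ₗ[𝕜] F)
    {M : ℝ} (hM : 0 ≤ M) (hA : ∀ x, ∃ y, e y = A (e x) ∧ ‖y‖ ≤ M * ‖x‖) :
    ∃ B : E →L[𝕜] E, (∀ x, e (B x) = A (e x)) ∧ ‖B‖ ≤ M := by
  choose f hf hfM using hA
  let L : E →ₗ[𝕜] E :=
    { toFun := f
      map_add' x y := he (by simp only [hf, map_add])
      map_smul' c x := he (by simp only [hf, map_smul, RingHom.id_apply]) }
  exact ⟨L.mkContinuous M hfM, hf, L.mkContinuous_norm_le hM hfM⟩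

theorem stmt_10_general {X : Type*} [NormedAddCommGroup X] [NormedSpace ℂ X]
    (e : X →ₗ[ℂ] (ℕ → ℂ)) (he : Function.Injective e)
    (hball : IsClosed (e '' {x : X | ‖x‖ ≤ 1}))
    (T : ℝ → X →L[ℂ] X)
    (hT : ∀ t ∈ Set.Ico (0 : ℝ) 1, ∀ x : X, e (T t x) = Ces t (e x))
    (M : ℝ) (hM : ∀ t ∈ Set.Ico (0 : ℝ) 1, ‖T t‖ ≤ M) :
    ∃ C1 : X →L[ℂ] X, (∀ x : X, e (C1 x) = Ces 1 (e x)) ∧ ‖C1‖ ≤ M := by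
  have hM0 : 0 ≤ M := (norm_nonneg _).trans (hM 0 ⟨le_rfl, one_pos⟩)
  have hIco : ∀ᶠ t in 𝓝[<] (1 : ℝ), t ∈ Set.Ico (0 : ℝ) 1 := Ico_mem_nhdsLT zero_lt_one
  refine exists_continuousLinearMap_of_forall_exists_bound e he (cesLinearMap 1) hM0 fun x => ?_
  have hclosed : IsClosed (e '' closedBall 0 (M * ‖x‖)) :=
    isClosed_image_closedBall_of_isClosed_image_unitBall e
      (by simpa only [closedBall, dist_zero_right] using hball) (by positivity)
  have hlim : Tendsto (fun t => e (T t x)) (𝓝[<] 1) (𝓝 (Ces 1 (e x))) :=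
    ((continuous_ces_left (e x)).continuousWithinAt.tendsto).congr'
      (hIco.mono fun t ht => (hT t ht x).symm)
  obtain ⟨y, hy, hey⟩ := hclosed.mem_of_tendsto hlim <| hIco.mono fun t ht =>
    ⟨T t x, mem_closedBall_zero_iff.mpr <| (T t).le_of_opNorm_le (hM t ht) x, rfl⟩
  exact ⟨y, hey, mem_closedBall_zero_iff.mp hy⟩

/-- Let X ⊆ ω be a BK-space (continuous injective embedding e into ω) whose
closed unit ball is closed in ω.  If C_t is bounded on X for every t ∈ [0,1) with
M = sup_t ‖C_t‖ < ∞, then C₁ is a bounded operator on X with ‖C₁‖ ≤ M. -/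
theorem stmt_10 {X : Type*} [NormedAddCommGroup X] [NormedSpace ℂ X] [CompleteSpace X]
    (e : X →ₗ[ℂ] (ℕ → ℂ)) (he : Function.Injective e) (hec : Continuous e)
    (hball : IsClosed (e '' {x : X | ‖x‖ ≤ 1}))
    (T : ℝ → X →L[ℂ] X)
    (hT : ∀ t ∈ Set.Ico (0 : ℝ) 1, ∀ x : X, e (T t x) = Ces t (e x))
    (M : ℝ) (hM : ∀ t ∈ Set.Ico (0 : ℝ) 1, ‖T t‖ ≤ M) :
    ∃ C1 : X →L[ℂ] X, (∀ x : X, e (C1 x) = Ces 1 (e x)) ∧ ‖C1‖ ≤ M :=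
  stmt_10_general e he hball T hT M hM
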